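/- For all integers L ≥ 0 and A with -L ≤ A ≤ L, the normalized q-trinomial coefficient Q_0(L,A,q) = T_0(L,A,q)/(q)_L admits the representation Q_0(L,A,q) = Σ_{s=0, s ≡ L+A (mod 2)}^{∞} q^{s²/2} / ((q)_{(L-A-s)/2} (q)_{(L+A-s)/2} (q)_s), where the sum is effectively finite since terms with a negative Pochhammer index in a denominator vanish. -/

import Mathlib

/-!
Inverting the base of a `q`-Pochhammer symbol only changes it by a monomial:
`(q⁻¹; q⁻¹)_n = (-1)^n q^(-n(n+1)/2) (q; q)_n`. Substituting this into each term of `T_0(L, A, q)`,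
the signs cancel (the three lower indices `j`, `j + A`, `L - 2j - A` add up to `L`) and the powers
of `q` collapse to `q^(s²/2)` with `s = L - 2j - A`. Reindexing the sum by `s` gives the claim.
-/

open Finset

noncomputable section

/-- The field `F = RatFunc ℚ` of rational functions over `ℚ` in the variable `t`,
where `t` plays the role of `q^(1/2)`. -/
abbrev F : Type := RatFunc ℚ

/-- The variable `t = q^(1/2)`. -/
def t : F := RatFunc.X

/-- `q = t^2`. -/
def q : F := t ^ 2

/-- The Pochhammer symbol `(a; b)_n = ∏_{k=0}^{n-1} (1 - a bᵏ)`, set equal to `0` for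
negative `n` (so that any term containing a factor `1/(a;b)_n` with `n < 0` vanishes). -/
def poch (b a : F) (n : ℤ) : F :=
  if n < 0 then 0 else ∏ k ∈ Finset.range n.toNat, (1 - a * b ^ k)

/-- The `q`-trinomial coefficient `((L; B; qq))_{A,2}` with base `qq`:
`∑_j qq^(j(j+B)) (qq)_L / ((qq)_j (qq)_{j+A} (qq)_{L-2j-A})`; the sum is finite since
terms with a negative Pochhammer index in the denominator vanish. -/
def trinom (qq : F) (L : ℕ) (B A : ℤ) : F :=
  ∑ j ∈ Finset.range (L + 1),
    qq ^ ((j : ℤ) * ((j : ℤ) + B)) * poch qq qq (L : ℤ) /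
      (poch qq qq (j : ℤ) * poch qq qq ((j : ℤ) + A) *
        poch qq qq ((L : ℤ) - 2 * (j : ℤ) - A))

/-- `T_n(L, A, q) = q^((L(L-n) - A(A-n))/2) ((L; A-n; q⁻¹))_{A,2}`; note `t ^ m = q ^ (m/2)`. -/
def T (n : ℤ) (L : ℕ) (A : ℤ) : F :=
  t ^ ((L : ℤ) * ((L : ℤ) - n) - A * (A - n)) * trinom q⁻¹ L (A - n) A

/-- `Q_n(L, A, q) = T_n(L, A, q) / (q)_L`. -/
def Q (n : ℤ) (L : ℕ) (A : ℤ) : F := T n L A / poch q q (L : ℤ)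

lemma t_ne_zero : t ≠ 0 := RatFunc.X_ne_zero

lemma q_pow_succ_ne_one (k : ℕ) : q ^ (k + 1) ≠ 1 := by
  intro h
  have hX : (Polynomial.X : Polynomial ℚ) ^ (2 * (k + 1)) = 1 := by
    apply RatFunc.algebraMap_injective ℚ
    rwa [map_pow, map_one, RatFunc.algebraMap_X, pow_mul]
  simpa using congrArg Polynomial.natDegree hX

lemma poch_natCast (b a : F) (n : ℕ) : poch b a n = ∏ k ∈ range n, (1 - a * b ^ k) := by
  simp [poch]

lemma poch_of_neg (b a : F) {n : ℤ} (hn : n < 0) : poch b a n = 0 := if_pos hn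

lemma poch_q_natCast_ne_zero (n : ℕ) : poch q q n ≠ 0 := by
  rw [poch_natCast, prod_ne_zero_iff]
  intro k _
  rw [← pow_succ', sub_ne_zero]
  exact (q_pow_succ_ne_one k).symm

lemma poch_inv_sq (u : F) (hu : u ≠ 0) (n : ℤ) :
    poch (u ^ 2)⁻¹ (u ^ 2)⁻¹ n = (-1) ^ n * u ^ (-(n * (n + 1))) * poch (u ^ 2) (u ^ 2) n := by
  rcases lt_or_ge n 0 with hn | hn
  · simp [poch_of_neg _ _ hn]
  lift n to ℕ using hn
  induction n with
  | zero => simp [poch]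
  | succ n ih =>
    simp only [poch_natCast] at ih ⊢
    have factor : 1 - (u ^ 2)⁻¹ * ((u ^ 2)⁻¹) ^ n
        = -u ^ (-(2 * (n : ℤ) + 2)) * (1 - u ^ 2 * (u ^ 2) ^ n) := by
      rw [inv_pow, ← mul_inv, show -(2 * (n : ℤ) + 2) = -((2 * (n + 1) : ℕ) : ℤ) by push_cast; ring,
        zpow_neg, zpow_natCast, pow_mul, ← pow_succ']
      field_simp
      ring
    have sign : (-1 : F) ^ ((n + 1 : ℕ) : ℤ) = (-1) ^ (n : ℤ) * (-1) := by
      rw [Nat.cast_succ, zpow_add_one₀ (by norm_num)]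
    have power : u ^ (-(((n + 1 : ℕ) : ℤ) * ((n + 1 : ℕ) + 1)))
        = u ^ (-((n : ℤ) * (n + 1))) * u ^ (-(2 * (n : ℤ) + 2)) := by
      rw [← zpow_add₀ hu]
      push_cast
      ring_nf
    rw [prod_range_succ, prod_range_succ, ih, factor, sign, power]
    ring

lemma poch_q_inv (n : ℤ) : poch q⁻¹ q⁻¹ n = (-1) ^ n * t ^ (-(n * (n + 1))) * poch q q n :=
  poch_inv_sq t t_ne_zero n

lemma q_inv_zpow (z : ℤ) : q⁻¹ ^ z = t ^ (-(2 * z)) := by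
  rw [inv_zpow', q, ← zpow_natCast, ← zpow_mul]
  ring_nf

def fermionTerm (L : ℕ) (A j : ℤ) : F :=
  t ^ ((L - 2 * j - A) ^ 2) / (poch q q j * poch q q (j + A) * poch q q (L - 2 * j - A))

lemma nonneg_of_fermionTerm_ne_zero {L : ℕ} {A j : ℤ} (h : fermionTerm L A j ≠ 0) :
    0 ≤ j ∧ 0 ≤ j + A ∧ 0 ≤ L - 2 * j - A := by
  refine ⟨?_, ?_, ?_⟩ <;> by_contra! hneg <;> simp [fermionTerm, poch_of_neg _ _ hneg] at h

lemma trinom_q_inv_term_div_poch (L : ℕ) (A j : ℤ) :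
    t ^ ((L : ℤ) * L - A * A) * (q⁻¹ ^ (j * (j + A)) * poch q⁻¹ q⁻¹ L /
        (poch q⁻¹ q⁻¹ j * poch q⁻¹ q⁻¹ (j + A) * poch q⁻¹ q⁻¹ (L - 2 * j - A))) / poch q q L
      = fermionTerm L A j := by
  have hsign : (-1 : F) ^ (L : ℤ) = (-1) ^ j * (-1) ^ (j + A) * (-1) ^ (L - 2 * j - A) := by
    rw [← zpow_add₀ (by norm_num), ← zpow_add₀ (by norm_num)]
    ring_nf
  have hpow : t ^ ((L : ℤ) * L - A * A) * t ^ (-(2 * (j * (j + A)))) * t ^ (-((L : ℤ) * (L + 1)))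
      = t ^ ((L - 2 * j - A) ^ 2) * t ^ (-(j * (j + 1))) * t ^ (-((j + A) * (j + A + 1)))
        * t ^ (-((L - 2 * j - A) * (L - 2 * j - A + 1))) := by
    simp only [← zpow_add₀ t_ne_zero]
    ring_nf
  have hunit (n : ℤ) : (-1 : F) ^ n * t ^ (-(n * (n + 1))) ≠ 0 :=
    mul_ne_zero (zpow_ne_zero _ (by norm_num)) (zpow_ne_zero _ t_ne_zero)
  rw [poch_q_inv, poch_q_inv, poch_q_inv, poch_q_inv, q_inv_zpow, fermionTerm]
  set cL := (-1 : F) ^ (L : ℤ) * t ^ (-((L : ℤ) * (L + 1)))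
  set c := (-1 : F) ^ j * t ^ (-(j * (j + 1))) * ((-1) ^ (j + A) * t ^ (-((j + A) * (j + A + 1))))
    * ((-1) ^ (L - 2 * j - A) * t ^ (-((L - 2 * j - A) * (L - 2 * j - A + 1))))
  have hkey : t ^ ((L : ℤ) * L - A * A) * t ^ (-(2 * (j * (j + A)))) * cL
      = c * t ^ ((L - 2 * j - A) ^ 2) := by
    simp only [cL, c, hsign]
    linear_combination ((-1 : F) ^ j * (-1) ^ (j + A) * (-1) ^ (L - 2 * j - A)) * hpow
  calc
    _ = t ^ ((L : ℤ) * L - A * A) * t ^ (-(2 * (j * (j + A)))) * cL * (poch q q L / poch q q L)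
          / (c * (poch q q j * poch q q (j + A) * poch q q (L - 2 * j - A))) := by
      simp only [c]
      ring
    _ = _ := by
      rw [hkey, div_self (poch_q_natCast_ne_zero L), mul_one,
        mul_div_mul_left _ _ (mul_ne_zero (mul_ne_zero (hunit _) (hunit _)) (hunit _))]

lemma Q_zero_eq_sum_fermionTerm (L : ℕ) (A : ℤ) :
    Q 0 L A = ∑ j ∈ range (L + 1), fermionTerm L A j := by
  simp only [Q, T, trinom, sub_zero, mul_sum, sum_div]
  exact sum_congr rfl fun j _ => trinom_q_inv_term_div_poch L A j

lemma sum_range_reindex_sub_two_mul {M : Type*} [AddCommMonoid M] (L : ℕ) (A : ℤ) (G : ℤ → M)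
    (hG : ∀ j, G j ≠ 0 → 0 ≤ j ∧ 0 ≤ j + A ∧ 0 ≤ L - 2 * j - A) :
    ∑ j ∈ range (L + 1), G j
      = ∑ s ∈ range (L + 1), if ((s : ℤ) + L + A) % 2 = 0 then G ((L - A - s) / 2) else 0 := by
  refine sum_bij_ne_zero (fun j _ _ => ((L : ℤ) - 2 * j - A).toNat) ?_ ?_ ?_ ?_
  · intro j _ hj
    have := hG j hj
    simp only [mem_range]
    omega
  · intro j₁ _ hj₁ j₂ _ hj₂ h
    have := hG j₁ hj₁
    have := hG j₂ hj₂
    omega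
  · intro s _ hs
    split_ifs at hs with hpar
    · have := hG _ hs
      refine ⟨((L - A - s) / 2).toNat, ?_, ?_, ?_⟩
      · simp only [mem_range]
        omega
      · rwa [Int.toNat_of_nonneg this.1]
      · omega
    · exact absurd rfl hs
  · intro j _ hj
    have := hG j hj
    rw [if_pos (by omega)]
    congr
    omega

/-- The fermionic representation of the normalized `q`-trinomial coefficient `Q_0(L,A,q)`
(equations (2.58)-(2.59) of Andrews-Baxter). The sum over `s` is effectively finite:
all terms with `s > L` vanish, so it is truncated at `s = L`. -/
theorem Q_zero_representation :
    ∀ (L : ℕ) (A : ℤ), -(L : ℤ) ≤ A → A ≤ (L : ℤ) →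
      Q 0 L A = ∑ s ∈ Finset.range (L + 1),
        if ((s : ℤ) + (L : ℤ) + A) % 2 = 0 then
          t ^ (s ^ 2) /
            (poch q q (((L : ℤ) - A - (s : ℤ)) / 2) *
              poch q q (((L : ℤ) + A - (s : ℤ)) / 2) * poch q q (s : ℤ))
        else 0 := by
  intro L A _ _
  rw [Q_zero_eq_sum_fermionTerm,
    sum_range_reindex_sub_two_mul L A _ fun j hj => nonneg_of_fermionTerm_ne_zero hj]
  refine sum_congr rfl fun s _ => ?_
  split_ifs with hpar
  · have hs : (L : ℤ) - 2 * ((L - A - s) / 2) - A = s := by omega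
    have hjA : (L - A - s) / 2 + A = ((L : ℤ) + A - s) / 2 := by omega
    rw [fermionTerm, hs, hjA, ← zpow_natCast, Nat.cast_pow]
  · rfl
end
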